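/- Let 0 < k < n. Then there exist strictly positive real numbers α_1, …, α_{k−1} with the following property. Define the weight w(I) = Σ_{1 ≤ a < b ≤ k} α_{b−a} · i_a · i_b for I = (i_1,…,i_k) ∈ V_{k,n}. Then for all I, J, X, Y ∈ V_{k,n} with {X,Y} ≠ {I,J} as unordered pairs and χ_I + χ_J = χ_X + χ_Y, if I and J are noncrossing then w(I) + w(J) < w(X) + w(Y). (This weight function exhibits the noncrossing complex as a regular triangulation of the order polytope O_{k,n}.) -/
import Mathlib


/-- Two arcs `(i < i')` and `(j < j')` cross if `i < j < i' < j'` or `j < i < j' < i'`. -/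
def Cross (i i' j j' : ℕ) : Prop :=
  (i < j ∧ j < i' ∧ i' < j') ∨ (j < i ∧ i < j' ∧ j' < i')

/-- Two arcs `(i < i')` and `(j < j')` nest if `i < j < j' < i'` or `j < i < i' < j'`. -/
def Nest (i i' j j' : ℕ) : Prop :=
  (i < j ∧ j < j' ∧ j' < i') ∨ (j < i ∧ i < i' ∧ i' < j')

/-- `I : Fin k → ℕ` represents an element of `V_{k,n}`: a strictly increasing
`k`-tuple with entries in `[n] = {1, …, n}`. -/
def IsVkn (n : ℕ) {k : ℕ} (I : Fin k → ℕ) : Prop :=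
  StrictMono I ∧ ∀ a, 1 ≤ I a ∧ I a ≤ n

/-- `I, J ∈ V_{k,n}` are noncrossing if for all indices `a < b` such that
`I l = J l` for all `a < l < b`, the arcs `(I a < I b)` and `(J a < J b)` do not cross. -/
def NonCrossing {k : ℕ} (I J : Fin k → ℕ) : Prop :=
  ∀ a b : Fin k, a < b → (∀ l : Fin k, a < l → l < b → I l = J l) →
    ¬ Cross (I a) (I b) (J a) (J b)

/-- `I, J ∈ V_{k,n}` are nonnesting if for all indices `a < b`
the arcs `(I a < I b)` and `(J a < J b)` do not nest. -/
def NonNesting {k : ℕ} (I J : Fin k → ℕ) : Prop :=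
  ∀ a b : Fin k, a < b → ¬ Nest (I a) (I b) (J a) (J b)

/-- `x` is an entry of the tuple `I` (i.e. `x` belongs to `I` viewed as a subset of `[n]`). -/
def MemT {k : ℕ} (I : Fin k → ℕ) (x : ℕ) : Prop := ∃ a, I a = x

/-- The characteristic vector `χ_I ∈ {0,1}^{[k]×[m]}` (`m = n−k`), given in 0-based
coordinates: `χ_I(a,b) = 1` iff `i_{a+1} ≤ (a+1)+(b+1)−1 = a+b+1`. -/
def chi (m : ℕ) {k : ℕ} (I : Fin k → ℕ) : Fin k × Fin m → ℕ :=
  fun p => if I p.1 ≤ p.1.val + p.2.val + 1 then 1 else 0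

/-- The top element `(n−k+1, n−k+2, …, n)` of `V_{k,n}`. -/
def TopVec (n k : ℕ) : Fin k → ℕ := fun a => n - k + 1 + a.val

/-- A tableau of shape `k × m`: weakly increasing along rows from left to right and
along columns from bottom to top (rows labeled from top to bottom). -/
def IsTableau {k m : ℕ} (T : Fin k × Fin m → ℕ) : Prop :=
  (∀ a : Fin k, ∀ b b' : Fin m, b ≤ b' → T (a, b) ≤ T (a, b')) ∧
  (∀ a a' : Fin k, ∀ b : Fin m, a ≤ a' → T (a', b) ≤ T (a, b))

/-- The weight `w(I) = Σ_{1 ≤ a < b ≤ k} α_{b−a}·i_a·i_b` of `I ∈ V_{k,n}`. -/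
noncomputable def weight {k : ℕ} (α : ℕ → ℝ) (I : Fin k → ℕ) : ℝ :=
  ∑ a : Fin k, ∑ b : Fin k,
    if a.val < b.val then α (b.val - a.val) * (I a : ℝ) * (I b : ℝ) else 0

lemma fin_sm_le {k : ℕ} {I : Fin k → ℕ} (h : StrictMono I) :
    ∀ c (a b : Fin k), a.val + c = b.val → I a + c ≤ I b := by
  intro c
  induction c with
  | zero =>
    intro a b hab
    have : a = b := Fin.ext (by omega)
    subst this; omega
  | succ c ih =>
    intro a b hab
    have hb' : a.val + c < k := by omega
    have h1 := ih a ⟨a.val + c, hb'⟩ rfl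
    have h2 : (⟨a.val + c, hb'⟩ : Fin k) < b := by
      simp only [Fin.lt_def]; omega
    have h3 := h h2
    omega

lemma vkn_bounds {n k : ℕ} (hk : 0 < k) {I : Fin k → ℕ} (h : IsVkn n I) (a : Fin k) :
    a.val + 1 ≤ I a ∧ I a ≤ n - k + a.val + 1 := by
  obtain ⟨hm, hb⟩ := h
  have ha := a.isLt
  have h0 := fin_sm_le hm a.val ⟨0, hk⟩ a (by simp)
  have hlast := fin_sm_le hm (k - 1 - a.val) a ⟨k - 1, by omega⟩ (by simp; omega)
  have h1 := (hb ⟨0, hk⟩).1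
  have h2 := (hb ⟨k - 1, by omega⟩).2
  omega

lemma window {m a u u' : ℕ} (hm : 0 < m)
    (h1 : a + 1 ≤ u) (h2 : u ≤ a + m + 1) (h1' : a + 1 ≤ u') (h2' : u' ≤ a + m + 1)
    (hb : ∀ b : Fin m, (u ≤ a + b.val + 1 ↔ u' ≤ a + b.val + 1)) : u = u' := by
  rcases lt_trichotomy u u' with h | h | h
  · exfalso
    have hu : u - a - 1 < m := by omega
    have := (hb ⟨u - a - 1, hu⟩).mp (by simp only [Fin.val_mk]; omega)
    simp only [Fin.val_mk] at this; omega
  · exact h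
  · exfalso
    have hu : u' - a - 1 < m := by omega
    have := (hb ⟨u' - a - 1, hu⟩).mpr (by simp only [Fin.val_mk]; omega)
    simp only [Fin.val_mk] at this; omega

lemma bits {iv jv xv yv v : ℕ}
    (h : (if iv ≤ v then 1 else 0) + (if jv ≤ v then 1 else 0)
       = (if xv ≤ v then (1 : ℕ) else 0) + (if yv ≤ v then 1 else 0)) :
    (max iv jv ≤ v ↔ max xv yv ≤ v) ∧ (min iv jv ≤ v ↔ min xv yv ≤ v) := by
  split_ifs at h <;> omega

lemma pair_of_minmax {i j x y : ℕ} (hmin : min i j = min x y) (hmax : max i j = max x y) :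
    (x = i ∧ y = j) ∨ (x = j ∧ y = i) := by omega

/-- there exist positive reals `α_1, …, α_{k−1}` such that the weight
`w(I) = Σ_{a<b} α_{b−a} i_a i_b` certifies the noncrossing complex as a regular
triangulation: whenever `{X,Y} ≠ {I,J}`, `χ_I + χ_J = χ_X + χ_Y` and `I, J` are
noncrossing, one has `w(I) + w(J) < w(X) + w(Y)`. -/
theorem stmt16 {n k : ℕ} (hk : 0 < k) (hkn : k < n) :
    ∃ α : ℕ → ℝ, (∀ d, 1 ≤ d → d ≤ k - 1 → 0 < α d) ∧
      ∀ I J X Y : Fin k → ℕ,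
        IsVkn n I → IsVkn n J → IsVkn n X → IsVkn n Y →
        ¬ ((X = I ∧ Y = J) ∨ (X = J ∧ Y = I)) →
        (∀ p : Fin k × Fin (n - k),
          chi (n - k) I p + chi (n - k) J p = chi (n - k) X p + chi (n - k) Y p) →
        NonCrossing I J →
        weight α I + weight α J < weight α X + weight α Y := by
  classical
  set m := n - k with hm'
  have hm : 0 < m := by omega
  set C : ℕ := k * k * n * n + 1 with hC'
  have hC : (0 : ℝ) < (C : ℝ) := by
    have : 0 < C := by omega
    exact_mod_cast this
  set ε : ℝ := 1 / (C : ℝ) with hε'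
  have hε0 : 0 < ε := by positivity
  have hε1 : ε ≤ 1 := by
    rw [hε', div_le_one hC]
    exact_mod_cast (by omega : 1 ≤ C)
  have hεC : ((k : ℝ) * k * ((n : ℝ) * n)) * ε < 1 := by
    rw [hε', mul_one_div, div_lt_one hC]
    have h1 : ((k * k * n * n : ℕ) : ℝ) < (C : ℝ) := by exact_mod_cast (by omega : k * k * n * n < C)
    have h2 : ((k * k * n * n : ℕ) : ℝ) = (k : ℝ) * k * ((n : ℝ) * n) := by push_cast; ring
    rw [← h2]
    exact h1
  refine ⟨fun d => ε ^ d, fun d _ _ => pow_pos hε0 d, ?_⟩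
  intro I J X Y hI hJ hX hY hne hchi hnc
  have hbI := fun a => vkn_bounds hk hI a
  have hbJ := fun a => vkn_bounds hk hJ a
  have hbX := fun a => vkn_bounds hk hX a
  have hbY := fun a => vkn_bounds hk hY a
  -- pointwise pair equality
  have pairEq : ∀ a : Fin k, (X a = I a ∧ Y a = J a) ∨ (X a = J a ∧ Y a = I a) := by
    intro a
    have hbits : ∀ b : Fin m,
        (max (I a) (J a) ≤ a.val + b.val + 1 ↔ max (X a) (Y a) ≤ a.val + b.val + 1) ∧
        (min (I a) (J a) ≤ a.val + b.val + 1 ↔ min (X a) (Y a) ≤ a.val + b.val + 1) := by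
      intro b
      have h := hchi (a, b)
      simp only [chi] at h
      exact bits h
    have hmax : max (I a) (J a) = max (X a) (Y a) := by
      apply window hm (a := a.val)
      · exact le_trans (hbI a).1 (le_max_left _ _)
      · exact max_le (by have := (hbI a).2; omega) (by have := (hbJ a).2; omega)
      · exact le_trans (hbX a).1 (le_max_left _ _)
      · exact max_le (by have := (hbX a).2; omega) (by have := (hbY a).2; omega)
      · exact fun b => (hbits b).1
    have hmin : min (I a) (J a) = min (X a) (Y a) := by
      apply window hm (a := a.val)
      · exact le_min (hbI a).1 (hbJ a).1
      · exact le_trans (min_le_left _ _) (by have := (hbI a).2; omega)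
      · exact le_min (hbX a).1 (hbY a).1
      · exact le_trans (min_le_left _ _) (by have := (hbX a).2; omega)
      · exact fun b => (hbits b).2
    exact pair_of_minmax hmin hmax
  -- the difference vector and the swap marker
  set D : Fin k → ℤ := fun a => (I a : ℤ) - (J a : ℤ) with hD'
  set t : Fin k → Bool := fun a => decide (X a ≠ I a) with ht'
  have hT : ∀ a : Fin k, (t a = false → X a = I a ∧ Y a = J a) ∧
      (t a = true → X a = J a ∧ Y a = I a) := by
    intro a
    constructor
    · intro h
      have hx : X a = I a := by
        have := h
        rw [ht'] at this
        simpa using this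
      rcases pairEq a with ⟨h1, h2⟩ | ⟨h1, h2⟩
      · exact ⟨hx, h2⟩
      · exact ⟨hx, by omega⟩
    · intro h
      have hx : X a ≠ I a := by
        have := h
        rw [ht'] at this
        simpa using this
      rcases pairEq a with ⟨h1, _⟩ | hh
      · exact absurd h1 hx
      · exact hh
  -- consecutive mixed pairs are sign-opposite
  have consec : ∀ a b : Fin k, a.val < b.val → D a ≠ 0 → D b ≠ 0 →
      (∀ l : Fin k, a < l → l < b → I l = J l) → t a ≠ t b → D a * D b < 0 := by
    intro a b hab hDa hDb hbet hmix
    have habf : a < b := Fin.lt_def.mpr hab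
    have hcross := hnc a b habf hbet
    unfold Cross at hcross
    have hXm : X a < X b := hX.1 habf
    have hYm : Y a < Y b := hY.1 habf
    have hIa : I a ≠ J a := by
      intro h; apply hDa; rw [hD']; simp; omega
    have hIb : I b ≠ J b := by
      intro h; apply hDb; rw [hD']; simp; omega
    rcases Nat.lt_or_ge (I a) (J a) with h1 | h1
    · rcases Nat.lt_or_ge (I b) (J b) with h2 | h2
      · exfalso
        have hnle : I b ≤ J a := by
          by_contra hlt
          exact hcross (Or.inl ⟨h1, by omega, h2⟩)
        cases hta : t a <;> cases htb : t b
        · rw [hta, htb] at hmix; exact hmix rfl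
        · have e1 := ((hT a).1 hta).2
          have e2 := ((hT b).2 htb).2
          omega
        · have e1 := ((hT a).2 hta).1
          have e2 := ((hT b).1 htb).1
          omega
        · rw [hta, htb] at hmix; exact hmix rfl
      · have h2' : J b < I b := by omega
        apply mul_neg_of_neg_of_pos
        · rw [hD']; simp; omega
        · rw [hD']; simp; omega
    · have h1' : J a < I a := by omega
      rcases Nat.lt_or_ge (J b) (I b) with h2 | h2
      · exfalso
        have hnle : J b ≤ I a := by
          by_contra hlt
          exact hcross (Or.inr ⟨h1', by omega, h2⟩)
        cases hta : t a <;> cases htb : t b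
        · rw [hta, htb] at hmix; exact hmix rfl
        · have e1 := ((hT a).1 hta).1
          have e2 := ((hT b).2 htb).1
          omega
        · have e1 := ((hT a).2 hta).2
          have e2 := ((hT b).1 htb).2
          omega
        · rw [hta, htb] at hmix; exact hmix rfl
      · have h2' : I b < J b := by omega
        apply mul_neg_of_pos_of_neg
        · rw [hD']; simp; omega
        · rw [hD']; simp; omega
  -- nonconstancy of t on the support of D
  have exT : ∃ a, D a ≠ 0 ∧ t a = true := by
    by_contra hcon
    push_neg at hcon
    apply hne
    left
    have hfa : ∀ a, t a = false ∨ D a = 0 := by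
      intro a
      by_cases hDa : D a = 0
      · exact Or.inr hDa
      · have := hcon a hDa
        cases h : t a
        · exact Or.inl rfl
        · exact absurd h this
    constructor
    · funext a
      rcases hfa a with h | h
      · exact ((hT a).1 h).1
      · have hIJ : I a = J a := by rw [hD'] at h; simp at h; omega
        rcases pairEq a with ⟨h1, _⟩ | ⟨h1, _⟩ <;> omega
    · funext a
      rcases hfa a with h | h
      · exact ((hT a).1 h).2
      · have hIJ : I a = J a := by rw [hD'] at h; simp at h; omega
        rcases pairEq a with ⟨_, h2⟩ | ⟨_, h2⟩ <;> omega
  have exF : ∃ a, D a ≠ 0 ∧ t a = false := by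
    by_contra hcon
    push_neg at hcon
    apply hne
    right
    have hfa : ∀ a, t a = true ∨ D a = 0 := by
      intro a
      by_cases hDa : D a = 0
      · exact Or.inr hDa
      · have := hcon a hDa
        cases h : t a
        · exact absurd h this
        · exact Or.inl rfl
    constructor
    · funext a
      rcases hfa a with h | h
      · exact ((hT a).2 h).1
      · have hIJ : I a = J a := by rw [hD'] at h; simp at h; omega
        rcases pairEq a with ⟨h1, _⟩ | ⟨h1, _⟩ <;> omega
    · funext a
      rcases hfa a with h | h
      · exact ((hT a).2 h).2
      · have hIJ : I a = J a := by rw [hD'] at h; simp at h; omega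
        rcases pairEq a with ⟨_, h2⟩ | ⟨_, h2⟩ <;> omega
  -- the finset of consecutive mixed pairs
  set M' : Finset (Fin k × Fin k) := Finset.univ.filter (fun p =>
    p.1.val < p.2.val ∧ D p.1 ≠ 0 ∧ D p.2 ≠ 0 ∧
    (∀ l : Fin k, p.1 < l → l < p.2 → I l = J l) ∧ t p.1 ≠ t p.2) with hM'
  have memM' : ∀ p : Fin k × Fin k,
      p ∈ M' ↔ (p.1.val < p.2.val ∧ D p.1 ≠ 0 ∧ D p.2 ≠ 0 ∧
        (∀ l : Fin k, p.1 < l → l < p.2 → I l = J l) ∧ t p.1 ≠ t p.2) := by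
    intro p
    rw [hM', Finset.mem_filter]
    simp only [Finset.mem_univ, true_and]
  have hfind : ∀ N (a b : Fin k), b.val - a.val ≤ N → a.val < b.val →
      D a ≠ 0 → D b ≠ 0 → t a ≠ t b → M'.Nonempty := by
    intro N
    induction N with
    | zero => intro a b h hab _ _ _; omega
    | succ N ih =>
      intro a b hN hab hDa hDb hmix
      by_cases hcons : ∀ l : Fin k, a < l → l < b → I l = J l
      · exact ⟨(a, b), (memM' (a, b)).mpr ⟨hab, hDa, hDb, hcons, hmix⟩⟩
      · push_neg at hcons
        obtain ⟨l, hal, hlb, hIJ⟩ := hcons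
        have hDl : D l ≠ 0 := by rw [hD']; simp; omega
        have hal' : a.val < l.val := hal
        have hlb' : l.val < b.val := hlb
        by_cases htl : t l = t a
        · exact ih l b (by omega) hlb' hDl hDb (by rw [htl]; exact hmix)
        · exact ih a l (by omega) hal' hDa hDl (fun h => htl h.symm)
  obtain ⟨a1, hDa1, hta1⟩ := exT
  obtain ⟨b1, hDb1, htb1⟩ := exF
  have hM'ne : M'.Nonempty := by
    rcases Nat.lt_or_ge a1.val b1.val with h | h
    · exact hfind _ a1 b1 le_rfl h hDa1 hDb1 (by rw [hta1, htb1]; simp)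
    · have hba : b1.val < a1.val := by
        rcases Nat.lt_or_ge b1.val a1.val with h' | h'
        · exact h'
        · exfalso
          have : a1 = b1 := Fin.ext (by omega)
          rw [this, htb1] at hta1
          exact Bool.noConfusion hta1
      exact hfind _ b1 a1 le_rfl hba hDb1 hDa1 (by rw [hta1, htb1]; simp)
  obtain ⟨p0, hp0, hminp⟩ := Finset.exists_min_image M' (fun p => p.2.val - p.1.val) hM'ne
  set g := p0.2.val - p0.1.val with hg'
  have hp0' := (memM' p0).mp hp0
  -- minimal gap property
  have L : ∀ N (a b : Fin k), b.val - a.val ≤ N → a.val < b.val →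
      D a ≠ 0 → D b ≠ 0 → t a ≠ t b → g ≤ b.val - a.val := by
    intro N
    induction N with
    | zero => intro a b h hab _ _ _; omega
    | succ N ih =>
      intro a b hN hab hDa hDb hmix
      by_cases hcons : ∀ l : Fin k, a < l → l < b → I l = J l
      · exact hminp (a, b) ((memM' (a, b)).mpr ⟨hab, hDa, hDb, hcons, hmix⟩)
      · push_neg at hcons
        obtain ⟨l, hal, hlb, hIJ⟩ := hcons
        have hDl : D l ≠ 0 := by rw [hD']; simp; omega
        have hal' : a.val < l.val := hal
        have hlb' : l.val < b.val := hlb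
        by_cases htl : t l = t a
        · have := ih l b (by omega) hlb' hDl hDb (by rw [htl]; exact hmix); omega
        · have := ih a l (by omega) hal' hDa hDl (fun h => htl h.symm); omega
  have L2 : ∀ (a b : Fin k), a.val < b.val → D a ≠ 0 → D b ≠ 0 → t a ≠ t b →
      (∃ l : Fin k, a < l ∧ l < b ∧ D l ≠ 0) → g + 1 ≤ b.val - a.val := by
    rintro a b hab hDa hDb hmix ⟨l, hal, hlb, hDl⟩
    have hal' : a.val < l.val := hal
    have hlb' : l.val < b.val := hlb
    by_cases htl : t l = t a
    · have := L (b.val - l.val) l b le_rfl hlb' hDl hDb (by rw [htl]; exact hmix); omega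
    · have := L (l.val - a.val) a l le_rfl hal' hDa hDl (fun h => htl h.symm); omega
  -- bounds on D
  have habs : ∀ a b : Fin k, ((D a * D b : ℤ) : ℝ) ≤ (n : ℝ) * n := by
    intro a b
    have hDa : |D a| ≤ (n : ℤ) := by
      have h1 := hI.2 a; have h2 := hJ.2 a
      simp only [hD', abs_le]
      omega
    have hDb : |D b| ≤ (n : ℤ) := by
      have h1 := hI.2 b; have h2 := hJ.2 b
      simp only [hD', abs_le]
      omega
    have : D a * D b ≤ (n : ℤ) * n := by
      calc D a * D b ≤ |D a * D b| := le_abs_self _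
        _ = |D a| * |D b| := abs_mul _ _
        _ ≤ (n : ℤ) * n := mul_le_mul hDa hDb (abs_nonneg _) (by positivity)
    exact_mod_cast this
  -- the correction sum
  set f : Fin k × Fin k → ℝ := fun p =>
    if p.1.val < p.2.val ∧ t p.1 ≠ t p.2 then
      ε ^ (p.2.val - p.1.val) * ((D p.1 * D p.2 : ℤ) : ℝ) else 0 with hf'
  set S : ℝ := ∑ p : Fin k × Fin k, f p with hS'
  have hfp0 : f p0 ≤ -(ε ^ g) := by
    obtain ⟨h1, h2, h3, h4, h5⟩ := hp0'
    have hD0 : D p0.1 * D p0.2 < 0 := consec p0.1 p0.2 h1 h2 h3 h4 h5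
    have hD1 : ((D p0.1 * D p0.2 : ℤ) : ℝ) ≤ -1 := by
      exact_mod_cast (by omega : (D p0.1 * D p0.2 : ℤ) ≤ -1)
    have hfeq : f p0 = ε ^ g * ((D p0.1 * D p0.2 : ℤ) : ℝ) := by
      rw [hf']; simp only []; rw [if_pos ⟨h1, h5⟩, hg']
    rw [hfeq]
    calc ε ^ g * ((D p0.1 * D p0.2 : ℤ) : ℝ) ≤ ε ^ g * (-1) :=
          mul_le_mul_of_nonneg_left hD1 (le_of_lt (pow_pos hε0 g))
      _ = -(ε ^ g) := by ring
  have hother : ∀ p : Fin k × Fin k, f p ≤ ε ^ (g + 1) * ((n : ℝ) * n) := by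
    intro p
    have hrhs : (0 : ℝ) ≤ ε ^ (g + 1) * ((n : ℝ) * n) := by positivity
    rw [hf']
    simp only []
    split_ifs with hc
    · obtain ⟨hab, hmix⟩ := hc
      rcases le_or_gt (D p.1 * D p.2) 0 with hP | hP
      · have hP' : ((D p.1 * D p.2 : ℤ) : ℝ) ≤ 0 := by exact_mod_cast hP
        calc ε ^ (p.2.val - p.1.val) * ((D p.1 * D p.2 : ℤ) : ℝ) ≤ 0 :=
              mul_nonpos_of_nonneg_of_nonpos (pow_nonneg hε0.le _) hP'
          _ ≤ _ := hrhs
      · have hDa : D p.1 ≠ 0 := by intro h; rw [h] at hP; simp at hP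
        have hDb : D p.2 ≠ 0 := by intro h; rw [h] at hP; simp at hP
        have hnc' : ¬ (∀ l : Fin k, p.1 < l → l < p.2 → I l = J l) := by
          intro hcons
          have := consec p.1 p.2 hab hDa hDb hcons hmix
          omega
        push_neg at hnc'
        obtain ⟨l, hal, hlb, hIJ⟩ := hnc'
        have hDl : D l ≠ 0 := by rw [hD']; simp; omega
        have hgap : g + 1 ≤ p.2.val - p.1.val := L2 p.1 p.2 hab hDa hDb hmix ⟨l, hal, hlb, hDl⟩
        have hpow : ε ^ (p.2.val - p.1.val) ≤ ε ^ (g + 1) :=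
          pow_le_pow_of_le_one hε0.le hε1 hgap
        have hP' : (0 : ℝ) ≤ ((D p.1 * D p.2 : ℤ) : ℝ) := by exact_mod_cast hP.le
        exact mul_le_mul hpow (habs p.1 p.2) hP' (pow_nonneg hε0.le _)
    · exact hrhs
  have hsum : S < 0 := by
    have hsplit : S = f p0 + ∑ p ∈ Finset.univ.erase p0, f p := by
      rw [hS']
      exact (Finset.add_sum_erase _ f (Finset.mem_univ p0)).symm
    have hcard : ((Finset.univ.erase p0).card : ℝ) ≤ ((k * k : ℕ) : ℝ) := by
      have : (Finset.univ.erase p0).card ≤ k * k := by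
        calc (Finset.univ.erase p0).card
            ≤ (Finset.univ : Finset (Fin k × Fin k)).card :=
              Finset.card_le_card (Finset.erase_subset _ _)
          _ = k * k := by simp
      exact_mod_cast this
    have hrest : ∑ p ∈ Finset.univ.erase p0, f p ≤ ((k * k : ℕ) : ℝ) * (ε ^ (g + 1) * ((n : ℝ) * n)) := by
      calc ∑ p ∈ Finset.univ.erase p0, f p
          ≤ (Finset.univ.erase p0).card • (ε ^ (g + 1) * ((n : ℝ) * n)) :=
            Finset.sum_le_card_nsmul _ _ _ (fun p _ => hother p)
        _ = ((Finset.univ.erase p0).card : ℝ) * (ε ^ (g + 1) * ((n : ℝ) * n)) := by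
            rw [nsmul_eq_mul]
        _ ≤ ((k * k : ℕ) : ℝ) * (ε ^ (g + 1) * ((n : ℝ) * n)) := by
            apply mul_le_mul_of_nonneg_right hcard (by positivity)
    have hfinal : ((k * k : ℕ) : ℝ) * (ε ^ (g + 1) * ((n : ℝ) * n)) < ε ^ g := by
      have heq : ((k * k : ℕ) : ℝ) * (ε ^ (g + 1) * ((n : ℝ) * n))
          = ε ^ g * (((k : ℝ) * k * ((n : ℝ) * n)) * ε) := by
        push_cast
        rw [pow_succ]
        ring
      rw [heq]
      calc ε ^ g * (((k : ℝ) * k * ((n : ℝ) * n)) * ε) < ε ^ g * 1 :=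
            mul_lt_mul_of_pos_left hεC (pow_pos hε0 g)
        _ = ε ^ g := mul_one _
    rw [hsplit]
    linarith
  -- the weight identity
  have hterm : ∀ a b : Fin k,
      (if a.val < b.val then ε ^ (b.val - a.val) * (X a : ℝ) * (X b : ℝ) else 0)
      + (if a.val < b.val then ε ^ (b.val - a.val) * (Y a : ℝ) * (Y b : ℝ) else 0)
      + f (a, b)
      = (if a.val < b.val then ε ^ (b.val - a.val) * (I a : ℝ) * (I b : ℝ) else 0)
      + (if a.val < b.val then ε ^ (b.val - a.val) * (J a : ℝ) * (J b : ℝ) else 0) := by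
    intro a b
    rw [hf']
    simp only []
    by_cases hab : a.val < b.val
    · simp only [if_pos hab]
      by_cases hmix : t a = t b
      · rw [if_neg (by intro hc; exact hc.2 hmix)]
        cases hta : t a
        · obtain ⟨ea1, ea2⟩ := (hT a).1 hta
          obtain ⟨eb1, eb2⟩ := (hT b).1 (by rw [← hmix, hta])
          rw [ea1, ea2, eb1, eb2]; ring
        · obtain ⟨ea1, ea2⟩ := (hT a).2 hta
          obtain ⟨eb1, eb2⟩ := (hT b).2 (by rw [← hmix, hta])
          rw [ea1, ea2, eb1, eb2]; ring
      · rw [if_pos ⟨hab, hmix⟩, hD']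
        cases hta : t a <;> cases htb : t b
        · rw [hta, htb] at hmix; exact absurd rfl hmix
        · obtain ⟨ea1, ea2⟩ := (hT a).1 hta
          obtain ⟨eb1, eb2⟩ := (hT b).2 htb
          rw [ea1, ea2, eb1, eb2]
          push_cast
          ring
        · obtain ⟨ea1, ea2⟩ := (hT a).2 hta
          obtain ⟨eb1, eb2⟩ := (hT b).1 htb
          rw [ea1, ea2, eb1, eb2]
          push_cast
          ring
        · rw [hta, htb] at hmix; exact absurd rfl hmix
    · rw [if_neg hab, if_neg hab, if_neg hab, if_neg hab,
        if_neg (by intro hc; exact hab hc.1)]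
      ring
  have hweq : weight (fun d => ε ^ d) X + weight (fun d => ε ^ d) Y + S
      = weight (fun d => ε ^ d) I + weight (fun d => ε ^ d) J := by
    rw [hS', Fintype.sum_prod_type]
    simp only [weight]
    rw [← Finset.sum_add_distrib, ← Finset.sum_add_distrib]
    rw [← Finset.sum_add_distrib]
    apply Finset.sum_congr rfl
    intro a _
    rw [← Finset.sum_add_distrib, ← Finset.sum_add_distrib, ← Finset.sum_add_distrib]
    apply Finset.sum_congr rfl
    intro b _
    exact hterm a b
  linarith [hweq, hsum]
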